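/- Let G be a finite simple graph, let k, ℓ be natural numbers, let X, Y be disjoint vertex sets of G with |N(X′) ∩ Y| ≥ |X′| + ℓ for every non-empty subset X′ ⊆ X, and let S be a vertex set of G with |S| ≤ k such that G − S has at most ℓ edges. Then |S \ (X ∪ Y)| ≤ k − |X|. -/

import Mathlib

/-- The graph obtained from `G` by deleting the vertices in `S`. -/
def SimpleGraph.delVerts {V : Type*} (G : SimpleGraph V) (S : Set V) : SimpleGraph V where
  Adj a b := G.Adj a b ∧ a ∉ S ∧ b ∉ S
  symm := ⟨fun _ _ h => ⟨h.1.symm, h.2.2, h.2.1⟩⟩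
  loopless := ⟨fun a h => G.ne_of_adj h.1 rfl⟩

/-!
Let `X' = X \ S`. By expansion `X'` has at least `|X'| + ℓ` neighbours in `Y`. Each neighbour
outside `S` is the endpoint of an edge of `G - S` from `X'`, and distinct such neighbours give
distinct edges (the `Y`-endpoint of an edge is determined since `X ∩ Y = ∅`), so at most `ℓ` of
them avoid `S`. Hence `|Y ∩ S| ≥ |X'|`, i.e. `|S ∩ (X ∪ Y)| ≥ |X ∩ S| + |X \ S| = |X|`, and
`|S \ (X ∪ Y)| = |S| - |S ∩ (X ∪ Y)| ≤ k - |X|`.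
-/

namespace SimpleGraph

variable {V : Type*}

theorem card_le_ncard_edgeSet_of_forall_exists_adj [Finite V] (H : SimpleGraph V)
    {A T : Finset V} (hAT : Disjoint A T) (hadj : ∀ y ∈ T, ∃ x ∈ A, H.Adj x y) :
    T.card ≤ H.edgeSet.ncard := by
  choose! g hgA hgadj using hadj
  rw [← Set.ncard_coe_finset]
  refine Set.ncard_le_ncard_of_injOn (fun y => s(g y, y)) (fun y hy => hgadj y hy) ?_
  intro y₁ hy₁ y₂ hy₂ heq
  rcases Sym2.eq_iff.mp heq with ⟨-, h⟩ | ⟨-, h⟩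
  · exact h
  · exact absurd (h ▸ hgA y₂ hy₂) (Finset.disjoint_right.mp hAT hy₁)

theorem card_sdiff_le_card_inter_of_expansion [Finite V] [DecidableEq V] (G : SimpleGraph V)
    [DecidableRel G.Adj] {ℓ : ℕ} {X Y S : Finset V} (hXY : Disjoint X Y)
    (hexp : ∀ X' ⊆ X, X'.Nonempty →
      X'.card + ℓ ≤ (Y.filter (fun y => ∃ x ∈ X', G.Adj x y)).card)
    (hSℓ : (G.delVerts ↑S).edgeSet.ncard ≤ ℓ) :
    (X \ S).card ≤ (Y ∩ S).card := by
  rcases (X \ S).eq_empty_or_nonempty with hempty | hne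
  · simp [hempty]
  set N := Y.filter (fun y => ∃ x ∈ X \ S, G.Adj x y)
  have hN : (X \ S).card + ℓ ≤ N.card := hexp _ Finset.sdiff_subset hne
  have hNout : (N \ S).card ≤ ℓ := by
    refine le_trans (card_le_ncard_edgeSet_of_forall_exists_adj (G.delVerts ↑S) (A := X \ S)
      ?_ ?_) hSℓ
    · exact hXY.mono Finset.sdiff_subset (Finset.sdiff_subset.trans (Finset.filter_subset _ _))
    · intro y hy
      obtain ⟨hyN, hyS⟩ := Finset.mem_sdiff.mp hy
      obtain ⟨x, hx, hxy⟩ := (Finset.mem_filter.mp hyN).2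
      exact ⟨x, hx, hxy, (Finset.mem_sdiff.mp hx).2, hyS⟩
  have hNin : (N ∩ S).card ≤ (Y ∩ S).card :=
    Finset.card_le_card (Finset.inter_subset_inter_right (Finset.filter_subset _ _))
  have := Finset.card_sdiff_add_card_inter N S
  omega

end SimpleGraph

/-- If `X, Y` are disjoint vertex sets with `|N(X') ∩ Y| ≥ |X'| + ℓ` for every non-empty
`X' ⊆ X`, and `S` is a set of at most `k` vertices whose deletion leaves at most `ℓ` edges,
then `|S \ (X ∪ Y)| ≤ k - |X|`. -/
theorem solution_minus_expansion_small {V : Type*} [Fintype V] [DecidableEq V]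
    (G : SimpleGraph V) [DecidableRel G.Adj] (k ℓ : ℕ) (X Y : Finset V) (hXY : Disjoint X Y)
    (hexp : ∀ X' ⊆ X, X'.Nonempty →
      X'.card + ℓ ≤ (Y.filter (fun y => ∃ x ∈ X', G.Adj x y)).card)
    (S : Finset V) (hSk : S.card ≤ k) (hSℓ : (G.delVerts ↑S).edgeSet.ncard ≤ ℓ) :
    ((S \ (X ∪ Y)).card : ℤ) ≤ (k : ℤ) - X.card := by
  have hXout : (X \ S).card ≤ (Y ∩ S).card :=
    G.card_sdiff_le_card_inter_of_expansion hXY hexp hSℓ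
  have hXsplit := Finset.card_sdiff_add_card_inter X S
  have hXYS : (X ∩ S).card + (Y ∩ S).card = (S ∩ (X ∪ Y)).card := by
    rw [Finset.inter_comm S, Finset.union_inter_distrib_right,
      Finset.card_union_of_disjoint (hXY.mono Finset.inter_subset_left Finset.inter_subset_left)]
  have hSsplit := Finset.card_sdiff_add_card_inter S (X ∪ Y)
  omega
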